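/- Let Φ : ℝ^n → ℝ^n be C¹ with (∂Φ/∂x) f(x) = Λ Φ(x) for all x, where Λ ∈ ℝ^{n×n}. Define along solutions of the lifted Hamiltonian system ẋ = f(x), ṗ = −(Df(x))ᵀ p the quantities X(t) = e^{−Λt} Φ(x(t)) and P(t) = e^{Λᵀ t} ((∂Φ/∂x)(x(t))ᵀ)^{−1} p(t) (assuming the Jacobian of Φ is invertible along the trajectory). Then Ẋ(t) = 0 and Ṗ(t) = 0 for all t; that is, X and P are constants of motion. -/

import Mathlib

open NormedSpace
open scoped Matrix

/-- A continuous linear map on `Fin n → ℝ` agrees with multiplication by its matrix. -/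
lemma clm_apply_eq_mulVec {n : ℕ} (L : (Fin n → ℝ) →L[ℝ] (Fin n → ℝ))
    (A : Matrix (Fin n) (Fin n) ℝ) (hA : ∀ i j, A i j = L (Pi.single j 1) i)
    (v : Fin n → ℝ) : L v = A.mulVec v := by
  have hv : v = ∑ j, v j • (Pi.single j 1 : Fin n → ℝ) := by
    funext k
    simp [Finset.sum_apply, Pi.single_apply]
  conv_lhs => rw [hv]
  rw [map_sum]
  funext i
  rw [Finset.sum_apply]
  simp only [map_smul, Pi.smul_apply, smul_eq_mul]
  simp only [Matrix.mulVec, dotProduct, hA]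
  exact Finset.sum_congr rfl fun j _ => mul_comm _ _

/-- Along solutions of the lifted Hamiltonian system ẋ = f(x),
ṗ = −(Df(x))ᵀ p, the canonical Koopman coordinates X(t) = e^{−Λt} Φ(x(t)) and
P(t) = e^{Λᵀ t} ((∂Φ/∂x)ᵀ)^{−1} p(t) are constants of motion: Ẋ = 0 and Ṗ = 0. -/
theorem koopman_canonical_coordinates_integrable
    {n : ℕ} (f : (Fin n → ℝ) → (Fin n → ℝ)) (hf : ContDiff ℝ (⊤ : ℕ∞) f)
    (Φ : (Fin n → ℝ) → (Fin n → ℝ)) (hΦ : ContDiff ℝ 2 Φ)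
    (Lam : Matrix (Fin n) (Fin n) ℝ)
    (heig : ∀ y, fderiv ℝ Φ y (f y) = Lam.mulVec (Φ y))
    (DΦ : (Fin n → ℝ) → Matrix (Fin n) (Fin n) ℝ)
    (hDΦ : ∀ y i j, DΦ y i j = fderiv ℝ Φ y (Pi.single j 1) i)
    (x p : ℝ → (Fin n → ℝ))
    (hx : ∀ t, HasDerivAt x (f (x t)) t)
    (hp : ∀ t, HasDerivAt p (fun i => -∑ j, p t j * fderiv ℝ f (x t) (Pi.single i 1) j) t)
    (hinv : ∀ t, IsUnit ((DΦ (x t))ᵀ))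
    (X P : ℝ → (Fin n → ℝ))
    (hX : ∀ t, X t = (exp ((-t) • Lam)).mulVec (Φ (x t)))
    (hP : ∀ t, P t = (exp (t • Lamᵀ)).mulVec ((((DΦ (x t))ᵀ)⁻¹).mulVec (p t))) :
    ∀ t, HasDerivAt X 0 t ∧ HasDerivAt P 0 t := by
  classical
  letI : SeminormedRing (Matrix (Fin n) (Fin n) ℝ) := Matrix.linftyOpSemiNormedRing
  letI : NormedRing (Matrix (Fin n) (Fin n) ℝ) := Matrix.linftyOpNormedRing
  letI : NormedAlgebra ℝ (Matrix (Fin n) (Fin n) ℝ) := Matrix.linftyOpNormedAlgebra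
  haveI : CompleteSpace (Matrix (Fin n) (Fin n) ℝ) := FiniteDimensional.complete ℝ _
  -- entry extraction for matrix-valued derivatives
  have entry_deriv : ∀ (A : ℝ → Matrix (Fin n) (Fin n) ℝ) (A' : Matrix (Fin n) (Fin n) ℝ)
      (s : ℝ), HasDerivAt A A' s → ∀ i j, HasDerivAt (fun u => A u i j) (A' i j) s := by
    intro A A' s hA i j
    let L : Matrix (Fin n) (Fin n) ℝ →ₗ[ℝ] ℝ :=
      { toFun := fun M => M i j, map_add' := fun _ _ => rfl, map_smul' := fun _ _ => rfl }
    exact (LinearMap.toContinuousLinearMap L).hasFDerivAt.comp_hasDerivAt s hA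
  -- assembling matrix-valued derivatives from entries
  have deriv_entry : ∀ (A : ℝ → Matrix (Fin n) (Fin n) ℝ) (A' : Matrix (Fin n) (Fin n) ℝ)
      (s : ℝ), (∀ i j, HasDerivAt (fun u => A u i j) (A' i j) s) → HasDerivAt A A' s := by
    intro A A' s h
    let L : (Fin n → Fin n → ℝ) →ₗ[ℝ] Matrix (Fin n) (Fin n) ℝ :=
      { toFun := fun v => Matrix.of v, map_add' := fun _ _ => rfl,
        map_smul' := fun _ _ => rfl }
    have h1 : HasDerivAt (fun u => (fun i j => A u i j : Fin n → Fin n → ℝ))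
        (fun i j => A' i j) s :=
      hasDerivAt_pi.2 fun i => hasDerivAt_pi.2 fun j => h i j
    exact (LinearMap.toContinuousLinearMap L).hasFDerivAt.comp_hasDerivAt s h1
  intro t
  set y := x t with hy
  have hΦd : Differentiable ℝ Φ := hΦ.differentiable (by norm_num)
  have hfd : Differentiable ℝ f := hf.differentiable (by simp)
  set g := fderiv ℝ Φ with hgdef
  have hg : ContDiff ℝ 1 g := hΦ.fderiv_right (by norm_num)
  set f'' := fderiv ℝ g y with hf''def
  have hgder : HasFDerivAt g f'' y := ((hg.differentiable (by norm_num)) y).hasFDerivAt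
  have hsym : ∀ v w, f'' v w = f'' w v := by
    intro v w
    exact (hΦ.contDiffAt.isSymmSndFDerivAt (by simp)) v w
  -- derivative of s ↦ Φ (x s)
  have hΦx : HasDerivAt (fun s => Φ (x s)) (Lam.mulVec (Φ y)) t := by
    have := (hΦd y).hasFDerivAt.comp_hasDerivAt t (hx t)
    rwa [heig y] at this
  -- derivative of s ↦ g (x s)
  have hgx : HasDerivAt (fun s => g (x s)) (f'' (f y)) t :=
    hgder.comp_hasDerivAt t (hx t)
  -- key second-derivative identity
  have key : ∀ v, f'' (f y) v = Lam.mulVec (g y v) - g y (fderiv ℝ f y v) := by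
    intro v
    let mV : (Fin n → ℝ) →L[ℝ] (Fin n → ℝ) :=
      LinearMap.toContinuousLinearMap (Matrix.mulVecLin Lam)
    have h1 : HasFDerivAt (fun z => g z (f z))
        ((g y).comp (fderiv ℝ f y) + f''.flip (f y)) y :=
      hgder.clm_apply (hfd y).hasFDerivAt
    have h2 : HasFDerivAt (fun z => g z (f z)) (mV.comp (g y)) y := by
      have h2' : HasFDerivAt (mV ∘ Φ) (mV.comp (g y)) y :=
        mV.hasFDerivAt.comp y (hΦd y).hasFDerivAt
      have hfe : (fun z => g z (f z)) = mV ∘ Φ := by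
        funext z
        simpa [mV, Function.comp] using (heig z)
      rw [hfe]
      exact h2'
    have hD := h1.unique h2
    have := congrArg (fun (T : (Fin n → ℝ) →L[ℝ] (Fin n → ℝ)) => T v) hD
    simp only [ContinuousLinearMap.add_apply, ContinuousLinearMap.coe_comp',
      Function.comp_apply, ContinuousLinearMap.flip_apply] at this
    have hmv : mV (g y v) = Lam.mulVec (g y v) := rfl
    have hsy : f'' v (f y) = f'' (f y) v := hsym v (f y)
    rw [hsy] at this
    rw [eq_sub_iff_add_eq, ← hmv]
    linear_combination (norm := module) this
  -- the matrix of fderiv f at y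
  set Dfm : Matrix (Fin n) (Fin n) ℝ :=
    Matrix.of (fun i j => fderiv ℝ f y (Pi.single j 1) i) with hDfm
  set A : Matrix (Fin n) (Fin n) ℝ := DΦ y with hA
  have hAg : ∀ i j, A i j = g y (Pi.single j 1) i := fun i j => hDΦ y i j
  have hgy_mulVec : ∀ v, g y v = A.mulVec v :=
    clm_apply_eq_mulVec ((g y)) A hAg
  have hfy_mulVec : ∀ v, fderiv ℝ f y v = Dfm.mulVec v :=
    clm_apply_eq_mulVec ((fderiv ℝ f y)) Dfm (fun i j => rfl)
  -- entrywise derivative of s ↦ DΦ (x s)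
  set B' : Matrix (Fin n) (Fin n) ℝ := Lam * A - A * Dfm with hB'
  have hDΦx : ∀ i j, HasDerivAt (fun s => DΦ (x s) i j) (B' i j) t := by
    intro i j
    have hfun : (fun s => DΦ (x s) i j) = fun s => g (x s) (Pi.single j 1) i := by
      funext s; exact hDΦ (x s) i j
    have hj : HasDerivAt (fun s => g (x s) (Pi.single j 1))
        (f'' (f y) (Pi.single j 1)) t := by
      have := hgx.clm_apply (hasDerivAt_const t (Pi.single j 1))
      simpa using this
    have hij := (hasDerivAt_pi.1 hj) i
    rw [hfun]
    convert hij using 1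
    · rfl
    · rfl
    rw [key (Pi.single j 1)]
    have e1 : (Lam.mulVec (g y (Pi.single j 1))) i = (Lam * A) i j := by
      rw [hgy_mulVec]
      have : A.mulVec (Pi.single j 1) = fun k => A k j := by
        funext k
        simp [Matrix.mulVec, dotProduct, Pi.single_apply]
      rw [this]
      simp [Matrix.mul_apply, Matrix.mulVec, dotProduct]
    have e2 : (g y (fderiv ℝ f y (Pi.single j 1))) i = (A * Dfm) i j := by
      rw [hgy_mulVec, hfy_mulVec]
      have : Dfm.mulVec (Pi.single j 1) = fun k => Dfm k j := by
        funext k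
        simp [Matrix.mulVec, dotProduct, Pi.single_apply]
      rw [this]
      simp [Matrix.mul_apply, Matrix.mulVec, dotProduct]
    simp only [hB', Matrix.sub_apply, Pi.sub_apply]
    rw [← e1, ← e2]
  -- matrix-level derivative of M s := (DΦ (x s))ᵀ
  have hM : HasDerivAt (fun s => (DΦ (x s))ᵀ) (B'ᵀ) t := by
    apply deriv_entry
    intro i j
    exact hDΦx j i
  -- derivative of the inverse
  set N : Matrix (Fin n) (Fin n) ℝ := Ring.inverse (Aᵀ) with hN
  have hNM : N * Aᵀ = 1 := Ring.inverse_mul_cancel _ (hinv t)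
  have hMN : Aᵀ * N = 1 := Ring.mul_inverse_cancel _ (hinv t)
  have hinvd : HasDerivAt (fun s => Ring.inverse ((DΦ (x s))ᵀ)) (-(N * B'ᵀ * N)) t := by
    have hu : ((hinv t).unit : Matrix (Fin n) (Fin n) ℝ) = (DΦ (x t))ᵀ := (hinv t).unit_spec
    have hfder : HasFDerivAt Ring.inverse
        (-ContinuousLinearMap.mulLeftRight ℝ (Matrix (Fin n) (Fin n) ℝ)
          ↑(hinv t).unit⁻¹ ↑(hinv t).unit⁻¹) ((DΦ (x t))ᵀ) := by
      have := hasFDerivAt_ringInverse (𝕜 := ℝ) (hinv t).unit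
      rwa [hu] at this
    have := hfder.comp_hasDerivAt t hM
    have huinv : (((hinv t).unit⁻¹ : (Matrix (Fin n) (Fin n) ℝ)ˣ) : Matrix (Fin n) (Fin n) ℝ)
        = N := by
      rw [← Ring.inverse_unit (hinv t).unit, hu]
    convert this using 1
    · rfl
    · rfl
    · rfl
    · rfl
    rw [huinv]
    simp [ContinuousLinearMap.mulLeftRight_apply, mul_assoc]
  -- derivative of exp (s • Lamᵀ)
  have hExpP : HasDerivAt (fun s : ℝ => exp (s • Lamᵀ)) (Lamᵀ * exp (t • Lamᵀ)) t :=
    hasDerivAt_exp_smul_const' Lamᵀ t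
  have hcomm : Lamᵀ * exp (t • Lamᵀ) = exp (t • Lamᵀ) * Lamᵀ :=
    ((Commute.refl Lamᵀ).smul_right t).exp_right
  -- derivative of Q s := exp (s•Lamᵀ) * Ring.inverse ((DΦ (x s))ᵀ)
  have hQ : HasDerivAt (fun s : ℝ => exp (s • Lamᵀ) * Ring.inverse ((DΦ (x s))ᵀ))
      ((exp (t • Lamᵀ) * N) * Dfmᵀ) t := by
    have h0 := hExpP.mul hinvd
    have hBT : B'ᵀ = Aᵀ * Lamᵀ - Dfmᵀ * Aᵀ := by
      rw [hB']
      rw [Matrix.transpose_sub, Matrix.transpose_mul, Matrix.transpose_mul]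
    have hNB : N * B'ᵀ * N = Lamᵀ * N - N * Dfmᵀ := by
      rw [hBT, mul_sub, sub_mul]
      rw [show N * (Aᵀ * Lamᵀ) * N = N * Aᵀ * (Lamᵀ * N) by noncomm_ring]
      rw [show N * (Dfmᵀ * Aᵀ) * N = N * Dfmᵀ * (Aᵀ * N) by noncomm_ring]
      rw [hNM, hMN, one_mul, mul_one]
    convert h0 using 1
    · rfl
    · rfl
    · rfl
    · rfl
    rw [show Ring.inverse ((DΦ (x t))ᵀ) = N from rfl, hNB, hcomm]
    noncomm_ring
  -- entry derivatives of p
  have hpj : ∀ j, HasDerivAt (fun s => p s j)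
      (-∑ k, p t k * fderiv ℝ f y (Pi.single j 1) k) t := fun j => (hasDerivAt_pi.1 (hp t)) j
  constructor
  · -- X part
    have hsm : ∀ s : ℝ, (-s) • Lam = s • (-Lam) := fun s => by
      rw [neg_smul, smul_neg]
    have hExpX : HasDerivAt (fun s : ℝ => exp ((-s) • Lam))
        (exp ((-t) • Lam) * (-Lam)) t := by
      have h := hasDerivAt_exp_smul_const (𝕂 := ℝ) (-Lam) t
      have hfun : (fun s : ℝ => exp (s • (-Lam))) = fun s : ℝ => exp ((-s) • Lam) := by
        funext s; rw [hsm s]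
      simp only [hsm]
      exact h
    apply hasDerivAt_pi.2
    intro i
    have hfun : (fun s => X s i) =
        fun s => ∑ j, exp ((-s) • Lam) i j * Φ (x s) j := by
      funext s
      rw [hX s]
      rfl
    rw [hfun]
    have hterm : ∀ j : Fin n, HasDerivAt (fun s => exp ((-s) • Lam) i j * Φ (x s) j)
        ((exp ((-t) • Lam) * (-Lam)) i j * Φ y j
          + exp ((-t) • Lam) i j * (Lam.mulVec (Φ y)) j) t := by
      intro j
      exact (entry_deriv _ _ t hExpX i j).mul ((hasDerivAt_pi.1 hΦx) j)
    have hsum := HasDerivAt.fun_sum (u := Finset.univ) (fun j _ => hterm j)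
    have hval : ∑ j, ((exp ((-t) • Lam) * (-Lam)) i j * Φ y j
        + exp ((-t) • Lam) i j * (Lam.mulVec (Φ y)) j) = 0 := by
      rw [Finset.sum_add_distrib]
      have e1 : ∑ j, (exp ((-t) • Lam) * (-Lam)) i j * Φ y j
          = ((exp ((-t) • Lam) * (-Lam)).mulVec (Φ y)) i := rfl
      have e2 : ∑ j, exp ((-t) • Lam) i j * (Lam.mulVec (Φ y)) j
          = ((exp ((-t) • Lam)).mulVec (Lam.mulVec (Φ y))) i := rfl
      rw [e1, e2]
      rw [Matrix.mulVec_mulVec]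
      rw [mul_neg, Matrix.neg_mulVec]
      simp
    rw [hval] at hsum
    simpa using hsum
  · -- P part
    apply hasDerivAt_pi.2
    intro i
    have hfun : (fun s => P s i) =
        fun s => ∑ j, (exp (s • Lamᵀ) * Ring.inverse ((DΦ (x s))ᵀ)) i j * p s j := by
      funext s
      rw [hP s]
      rw [Matrix.nonsing_inv_eq_ringInverse]
      rw [Matrix.mulVec_mulVec]
      rfl
    rw [hfun]
    have hterm : ∀ j : Fin n,
        HasDerivAt (fun s => (exp (s • Lamᵀ) * Ring.inverse ((DΦ (x s))ᵀ)) i j * p s j)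
        (((exp (t • Lamᵀ) * N) * Dfmᵀ) i j * p t j
          + (exp (t • Lamᵀ) * N) i j * (-∑ k, p t k * fderiv ℝ f y (Pi.single j 1) k)) t := by
      intro j
      have h1 := entry_deriv _ _ t hQ i j
      have h2 := hpj j
      have := h1.mul h2
      convert this using 2
      all_goals rfl
    have hsum := HasDerivAt.fun_sum (u := Finset.univ) (fun j _ => hterm j)
    have hp' : (fun j => -∑ k, p t k * fderiv ℝ f y (Pi.single j 1) k)
        = -(Dfmᵀ.mulVec (p t)) := by
      funext j
      simp only [Pi.neg_apply, neg_inj]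
      simp only [Matrix.mulVec, dotProduct, Matrix.transpose_apply]
      exact Finset.sum_congr rfl fun k _ => mul_comm _ _
    have hval : ∑ j, (((exp (t • Lamᵀ) * N) * Dfmᵀ) i j * p t j
        + (exp (t • Lamᵀ) * N) i j * (-∑ k, p t k * fderiv ℝ f y (Pi.single j 1) k)) = 0 := by
      rw [Finset.sum_add_distrib]
      have e1 : ∑ j, ((exp (t • Lamᵀ) * N) * Dfmᵀ) i j * p t j
          = (((exp (t • Lamᵀ) * N) * Dfmᵀ).mulVec (p t)) i := rfl
      have e2 : ∑ j, (exp (t • Lamᵀ) * N) i j * (-∑ k, p t k * fderiv ℝ f y (Pi.single j 1) k)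
          = ((exp (t • Lamᵀ) * N).mulVec (-(Dfmᵀ.mulVec (p t)))) i := by
        rw [show ((exp (t • Lamᵀ) * N).mulVec (-(Dfmᵀ.mulVec (p t)))) i
            = ∑ j, (exp (t • Lamᵀ) * N) i j * (-(Dfmᵀ.mulVec (p t))) j from rfl]
        exact Finset.sum_congr rfl fun j _ => by rw [← hp']
      rw [e1, e2]
      rw [Matrix.mulVec_neg, Matrix.mulVec_mulVec]
      simp
    rw [hval] at hsum
    simpa using hsum
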